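/- An integer d is representable as 2p² + pq + q² + 7rs for some integers p, q, r, s if and only if d mod 7 ∈ {0, 1, 2, 4}. -/
import Mathlib

lemma key7 : ∀ a b : ZMod 7, (2 * a ^ 2 + a * b + b ^ 2).val = 0 ∨
    (2 * a ^ 2 + a * b + b ^ 2).val = 1 ∨ (2 * a ^ 2 + a * b + b ^ 2).val = 2 ∨
    (2 * a ^ 2 + a * b + b ^ 2).val = 4 := by decide

theorem representable_iff_mod7 (d : ℤ) :
    (∃ p q r s : ℤ, d = 2 * p ^ 2 + p * q + q ^ 2 + 7 * r * s) ↔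
      d % 7 = 0 ∨ d % 7 = 1 ∨ d % 7 = 2 ∨ d % 7 = 4 := by
  constructor
  · rintro ⟨p, q, r, s, rfl⟩
    have hv : ((2 * p ^ 2 + p * q + q ^ 2 + 7 * r * s) % 7 : ℤ)
        = (((2 * p ^ 2 + p * q + q ^ 2 + 7 * r * s : ℤ) : ZMod 7).val : ℤ) :=
      (ZMod.val_intCast _).symm
    have hc : ((2 * p ^ 2 + p * q + q ^ 2 + 7 * r * s : ℤ) : ZMod 7)
        = 2 * (p : ZMod 7) ^ 2 + (p : ZMod 7) * (q : ZMod 7) + (q : ZMod 7) ^ 2 := by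
      push_cast
      have : (7 : ZMod 7) = 0 := by decide
      rw [this]; ring
    rw [hc] at hv
    rcases key7 (p : ZMod 7) (q : ZMod 7) with h | h | h | h <;>
      simp [h] at hv <;> omega
  · rintro (h | h | h | h)
    · exact ⟨0, 0, 1, d / 7, by ring_nf; omega⟩
    · exact ⟨0, 1, 1, (d - 1) / 7, by ring_nf; omega⟩
    · exact ⟨0, 3, 1, (d - 9) / 7, by ring_nf; omega⟩
    · exact ⟨0, 2, 1, (d - 4) / 7, by ring_nf; omega⟩
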